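/- Let f : ℝⁿ → ℝ be twice continuously differentiable with L-Lipschitz Hessian on a set containing x^k and x^{k+1}, and suppose x^{k+1} satisfies the cubic-regularization stationarity condition 0 = ∇f(x^k) + ∇²f(x^k)(x^{k+1} − x^k) + (σ_k/2)‖x^{k+1} − x^k‖(x^{k+1} − x^k) with 0 < σ_k ≤ 2L. If dist(·, X) ≤ κ‖∇f(·)‖ holds at x^{k+1} for a set X and constant κ > 0, then dist(x^{k+1}, X) ≤ (3/2)κL‖x^{k+1} − x^k‖². -/

import Mathlib

/-! A cubic-regularization step `y` from `x` satisfies `∇f x + ∇²f x (y - x) = -(σ/2)‖y - x‖(y - x)`,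
so `∇f y` differs from the first-order Taylor model at `x` — whose error is at most
`L/2 ‖y - x‖²` for an `L`-Lipschitz Hessian — by a vector of norm `σ/2 ‖y - x‖²`.
Hence `‖∇f y‖ ≤ (L + σ)/2 ‖y - x‖² ≤ 3L/2 ‖y - x‖²`, and the error bound converts this into a
bound on the distance to `X`. -/

open InnerProductSpace

theorem ContDiff.differentiable_gradient {E : Type*} [NormedAddCommGroup E]
    [InnerProductSpace ℝ E] [CompleteSpace E] {f : E → ℝ} (hf : ContDiff ℝ 2 f) :
    Differentiable ℝ (gradient f) :=
  ((toDual ℝ E).symm.contDiff.comp (hf.fderiv_right (by norm_num))).differentiable one_ne_zero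

section

variable {E F : Type*} [NormedAddCommGroup E] [NormedSpace ℝ E]
  [NormedAddCommGroup F] [NormedSpace ℝ F]

theorem Convex.norm_sub_sub_fderiv_le {g : E → F} {g' : E → E →L[ℝ] F} {s : Set E}
    {L : ℝ} {x y : E} (hs : Convex ℝ s) (hx : x ∈ s) (hy : y ∈ s)
    (hg : ∀ z ∈ s, HasFDerivAt g (g' z) z) (hLip : ∀ z ∈ s, ‖g' z - g' x‖ ≤ L * ‖z - x‖) :
    ‖g y - g x - g' x (y - x)‖ ≤ L / 2 * ‖y - x‖ ^ 2 := by
  set d := y - x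
  have hseg : ∀ t ∈ Set.Icc (0 : ℝ) 1, x + t • d ∈ s := fun t ht => by
    simpa [d, AffineMap.lineMap_apply_module', add_comm] using hs.lineMap_mem hx hy ht
  set φ : ℝ → F := fun t => g (x + t • d) - g x - t • g' x d
  have hφ : ∀ t ∈ Set.Icc (0 : ℝ) 1, HasDerivAt φ (g' (x + t • d) d - g' x d) t := by
    intro t ht
    have hline : HasDerivAt (fun t : ℝ => x + t • d) d t := by
      simpa using ((hasDerivAt_id t).smul_const d).const_add x
    exact (((hg _ (hseg t ht)).comp_hasDerivAt t hline).sub_const (g x)).sub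
      (by simpa using (hasDerivAt_id t).smul_const (g' x d))
  have hB : ∀ t, HasDerivAt (fun t => L / 2 * ‖d‖ ^ 2 * t ^ 2) (L * ‖d‖ ^ 2 * t) t := by
    intro t
    exact ((hasDerivAt_pow 2 t).const_mul (L / 2 * ‖d‖ ^ 2)).congr_deriv (by push_cast; ring)
  have bound : ∀ t ∈ Set.Ico (0 : ℝ) 1, ‖g' (x + t • d) d - g' x d‖ ≤ L * ‖d‖ ^ 2 * t := by
    intro t ht
    calc ‖g' (x + t • d) d - g' x d‖ ≤ ‖g' (x + t • d) - g' x‖ * ‖d‖ :=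
          (g' (x + t • d) - g' x).le_opNorm d
      _ ≤ L * ‖t • d‖ * ‖d‖ := by
          gcongr
          simpa using hLip _ (hseg t (Set.Ico_subset_Icc_self ht))
      _ = L * ‖d‖ ^ 2 * t := by
          rw [norm_smul, Real.norm_of_nonneg ht.1]; ring
  have := image_norm_le_of_norm_deriv_right_le_deriv_boundary
    (fun t ht => (hφ t ht).continuousAt.continuousWithinAt)
    (fun t ht => (hφ t (Set.Ico_subset_Icc_self ht)).hasDerivWithinAt)
    (by simp [φ]) hB bound (Set.right_mem_Icc.2 zero_le_one)
  simpa [φ, d] using this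

theorem Convex.norm_le_of_cubic_regularization_step {g : E → E} {g' : E → E →L[ℝ] E}
    {s : Set E} {L σ : ℝ} {x y : E} (hs : Convex ℝ s) (hx : x ∈ s) (hy : y ∈ s)
    (hg : ∀ z ∈ s, HasFDerivAt g (g' z) z) (hLip : ∀ z ∈ s, ‖g' z - g' x‖ ≤ L * ‖z - x‖)
    (hσ : 0 ≤ σ) (hstep : g x + g' x (y - x) + (σ / 2 * ‖y - x‖) • (y - x) = 0) :
    ‖g y‖ ≤ (L + σ) / 2 * ‖y - x‖ ^ 2 := by
  have hmodel : g x + g' x (y - x) = -((σ / 2 * ‖y - x‖) • (y - x)) :=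
    eq_neg_of_add_eq_zero_left hstep
  calc ‖g y‖ = ‖(g y - g x - g' x (y - x)) + (g x + g' x (y - x))‖ := by abel_nf
    _ ≤ ‖g y - g x - g' x (y - x)‖ + ‖g x + g' x (y - x)‖ := norm_add_le _ _
    _ ≤ L / 2 * ‖y - x‖ ^ 2 + σ / 2 * ‖y - x‖ ^ 2 := by
        gcongr
        · exact hs.norm_sub_sub_fderiv_le hx hy hg hLip
        · rw [hmodel, norm_neg, norm_smul, Real.norm_of_nonneg (by positivity)]
          exact (by ring : _ = _).le
    _ = (L + σ) / 2 * ‖y - x‖ ^ 2 := by ring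
end

theorem stmt12_general {n : ℕ} (f : EuclideanSpace ℝ (Fin n) → ℝ)
    (F : Set (EuclideanSpace ℝ (Fin n))) (X : Set (EuclideanSpace ℝ (Fin n)))
    (L σ κ : ℝ) (xk xk1 : EuclideanSpace ℝ (Fin n))
    (hf : ContDiff ℝ 2 f) (hF : Convex ℝ F)
    (hxk : xk ∈ F) (hxk1 : xk1 ∈ F)
    (hσ : 0 < σ) (hσ2 : σ ≤ 2 * L) (hκ : 0 < κ)
    (hLip : ∀ z ∈ F, ∀ w ∈ F,
      ‖fderiv ℝ (gradient f) z - fderiv ℝ (gradient f) w‖ ≤ L * ‖z - w‖)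
    (hstat : gradient f xk + (fderiv ℝ (gradient f) xk) (xk1 - xk)
        + (σ / 2 * ‖xk1 - xk‖) • (xk1 - xk) = 0)
    (hEB : Metric.infDist xk1 X ≤ κ * ‖gradient f xk1‖) :
    Metric.infDist xk1 X ≤ 3 / 2 * κ * L * ‖xk1 - xk‖ ^ 2 := by
  have hgrad : ‖gradient f xk1‖ ≤ (L + σ) / 2 * ‖xk1 - xk‖ ^ 2 :=
    hF.norm_le_of_cubic_regularization_step hxk hxk1
      (fun z _ => (hf.differentiable_gradient z).hasFDerivAt)
      (fun z hz => hLip z hz xk hxk) hσ.le hstat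
  calc Metric.infDist xk1 X ≤ κ * ‖gradient f xk1‖ := hEB
    _ ≤ κ * ((L + σ) / 2 * ‖xk1 - xk‖ ^ 2) := by gcongr
    _ ≤ κ * (3 / 2 * L * ‖xk1 - xk‖ ^ 2) := by gcongr; linarith
    _ = 3 / 2 * κ * L * ‖xk1 - xk‖ ^ 2 := by ring

theorem stmt12 {n : ℕ} (f : EuclideanSpace ℝ (Fin n) → ℝ)
    (F : Set (EuclideanSpace ℝ (Fin n))) (X : Set (EuclideanSpace ℝ (Fin n)))
    (L σ κ : ℝ) (xk xk1 : EuclideanSpace ℝ (Fin n))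
    (hf : ContDiff ℝ 2 f) (hF : Convex ℝ F)
    (hxk : xk ∈ F) (hxk1 : xk1 ∈ F)
    (hL : 0 < L) (hσ : 0 < σ) (hσ2 : σ ≤ 2 * L) (hκ : 0 < κ)
    (hXcl : IsClosed X) (hXne : X.Nonempty)
    (hLip : ∀ z ∈ F, ∀ w ∈ F,
      ‖fderiv ℝ (gradient f) z - fderiv ℝ (gradient f) w‖ ≤ L * ‖z - w‖)
    (hstat : gradient f xk + (fderiv ℝ (gradient f) xk) (xk1 - xk)
        + (σ / 2 * ‖xk1 - xk‖) • (xk1 - xk) = 0)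
    (hEB : Metric.infDist xk1 X ≤ κ * ‖gradient f xk1‖) :
    Metric.infDist xk1 X ≤ 3 / 2 * κ * L * ‖xk1 - xk‖ ^ 2 :=
  stmt12_general f F X L σ κ xk xk1 hf hF hxk hxk1 hσ hσ2 hκ hLip hstat hEB
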